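/- arXiv:2505.06235 — 4 statements merged into one kernel-verified Lean document; each statement's English description precedes it below -/
import Mathlib

section
/- Let O and H be the circumcenter and orthocenter of triangle ABC with circumradius R, and let K = diag(S_A, S_B, S_C) act on normalized barycentric coordinate vectors. Then O K Oᵀ + H K Hᵀ = R². -/
open scoped RealInnerProductSpace

noncomputable section

abbrev Pt := EuclideanSpace ℝ (Fin 2)

/-- Signed area of triangle XYZ in the plane. -/
def sArea (X Y Z : Pt) : ℝ :=
  ((Y 0 - X 0) * (Z 1 - X 1) - (Z 0 - X 0) * (Y 1 - X 1)) / 2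

/-- Conway symbol: `conwayA A B C = S_A = (b^2 + c^2 - a^2)/2`. -/
def conwayA (X Y Z : Pt) : ℝ :=
  (dist Z X ^ 2 + dist X Y ^ 2 - dist Y Z ^ 2) / 2

/-- The bilinear form given by the metric matrix K = diag (S_A, S_B, S_C). -/
def Kf (A B C : Pt) (u v : Fin 3 → ℝ) : ℝ :=
  conwayA A B C * u 0 * v 0 + conwayA B C A * u 1 * v 1 + conwayA C A B * u 2 * v 2

/-- The point with (normalized) barycentric coordinates `u` w.r.t. A, B, C. -/
def bary (A B C : Pt) (u : Fin 3 → ℝ) : Pt :=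
  u 0 • A + u 1 • B + u 2 • C

/-!
Put `a = A - H`, `b = B - H`, `c = C - H`. The altitude conditions say exactly that
`k = ⟪a, b⟫ = ⟪b, c⟫ = ⟪c, a⟫`, so `S_A = ⟪b - a, c - a⟫ = ‖a‖² - k`, and expanding
`‖P - H‖²` for `P = u₀ A + u₁ B + u₂ C` with `u₀ + u₁ + u₂ = 1` gives
`u K uᵀ = ‖P - H‖² - k`. Hence `O K Oᵀ + H K Hᵀ = OH² - 2k`, and Sylvester's relation
`H - O = (A - O) + (B - O) + (C - O)` turns `R² = ‖A - O‖²` into `OH² - 2k`.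
-/

section InnerProductSpace

variable {V : Type*} [NormedAddCommGroup V] [InnerProductSpace ℝ V]

theorem inner_sub_eq_of_altitudes {A B C H : V}
    (hH2 : ⟪H - B, A - C⟫ = 0) (hH3 : ⟪H - C, B - A⟫ = 0) :
    ⟪A - H, B - H⟫ = ⟪A - H, C - H⟫ ∧ ⟪A - H, B - H⟫ = ⟪B - H, C - H⟫ := by
  rw [show A - C = (A - H) - (C - H) by abel, ← neg_sub B H, inner_neg_left, inner_sub_right,
    neg_eq_zero, sub_eq_zero] at hH2
  rw [show B - A = (B - H) - (A - H) by abel, ← neg_sub C H, inner_neg_left, inner_sub_right,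
    neg_eq_zero, sub_eq_zero] at hH3
  constructor <;> linarith [real_inner_comm (A - H) (C - H), real_inner_comm (B - H) (C - H),
    real_inner_comm (A - H) (B - H)]

theorem dist_sq_eq_dist_sq_sub_two_inner {A B C O H : V}
    (hSylvester : H - O = (A - O) + (B - O) + (C - O))
    (hAB_AC : ⟪A - H, B - H⟫ = ⟪A - H, C - H⟫) :
    dist O A ^ 2 = dist O H ^ 2 - 2 * ⟪A - H, B - H⟫ := by
  have ho : (2 : ℝ) • (O - H) = (A - H) + (B - H) + (C - H) := by
    linear_combination (norm := module) hSylvester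
  have h2 : 2 * ⟪O - H, A - H⟫ = ‖A - H‖ ^ 2 + 2 * ⟪A - H, B - H⟫ := by
    rw [← real_inner_smul_left, ho, inner_add_left, inner_add_left, real_inner_self_eq_norm_sq,
      real_inner_comm (A - H), real_inner_comm (A - H), hAB_AC]
    ring
  rw [dist_eq_norm, dist_eq_norm, show O - A = (O - H) - (A - H) by abel, norm_sub_sq_real]
  linarith

end InnerProductSpace

theorem conwayA_eq_inner (X Y Z : Pt) : conwayA X Y Z = ⟪Y - X, Z - X⟫ := by
  rw [conwayA, dist_eq_norm, dist_eq_norm, dist_eq_norm, ← norm_neg (X - Y), neg_sub,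
    show Y - Z = (Y - X) - (Z - X) by abel, norm_sub_sq_real (Y - X)]
  ring

theorem eq_zero_of_inner_sub_eq_zero {A B C v : Pt} (h : sArea A B C ≠ 0)
    (hB : ⟪v, B - A⟫ = 0) (hC : ⟪v, C - A⟫ = 0) : v = 0 := by
  simp only [PiLp.inner_apply, Fin.sum_univ_two, RCLike.inner_apply, PiLp.sub_apply,
    conj_trivial] at hB hC
  have hdet : (B 0 - A 0) * (C 1 - A 1) - (C 0 - A 0) * (B 1 - A 1) ≠ 0 := by
    simpa [sArea] using h
  ext i
  fin_cases i
  · exact (mul_eq_zero.mp (by linear_combination (C 1 - A 1) * hB - (B 1 - A 1) * hC :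
      v 0 * ((B 0 - A 0) * (C 1 - A 1) - (C 0 - A 0) * (B 1 - A 1)) = 0)).resolve_right hdet
  · exact (mul_eq_zero.mp (by linear_combination (B 0 - A 0) * hC - (C 0 - A 0) * hB :
      v 1 * ((B 0 - A 0) * (C 1 - A 1) - (C 0 - A 0) * (B 1 - A 1)) = 0)).resolve_right hdet

theorem sub_eq_sum_sub_of_circumcenter_of_altitudes {A B C O H : Pt} (h : sArea A B C ≠ 0)
    (hO : dist O A = dist O B ∧ dist O B = dist O C)
    (hH2 : ⟪H - B, A - C⟫ = 0) (hH3 : ⟪H - C, B - A⟫ = 0) :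
    H - O = (A - O) + (B - O) + (C - O) := by
  rw [dist_comm O A, dist_comm O B, dist_comm O C, dist_eq_norm, dist_eq_norm, dist_eq_norm]
    at hO
  -- `O + (A - O) + (B - O) + (C - O)` is on the altitudes from `B` and `C`, which meet only at `H`
  have hAC : ⟪(A - O) + (C - O), A - C⟫ = 0 := by
    rw [show A - C = (A - O) - (C - O) by abel, real_inner_add_sub_eq_zero_iff]
    exact hO.1.trans hO.2
  have hBA : ⟪(B - O) + (A - O), B - A⟫ = 0 := by
    rw [show B - A = (B - O) - (A - O) by abel, real_inner_add_sub_eq_zero_iff]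
    exact hO.1.symm
  refine sub_eq_zero.mp (eq_zero_of_inner_sub_eq_zero h ?_ ?_)
  · rw [show H - O - (A - O + (B - O) + (C - O)) = (H - C) - ((B - O) + (A - O)) by abel,
      inner_sub_left, hH3, hBA, sub_zero]
  · rw [show H - O - (A - O + (B - O) + (C - O)) = (H - B) - ((A - O) + (C - O)) by abel,
      ← neg_sub A C, inner_neg_right, inner_sub_left, hH2, hAC, sub_zero, neg_zero]

theorem Kf_self_eq_dist_sq_sub {A B C H : Pt} {u : Fin 3 → ℝ} (hu : u 0 + u 1 + u 2 = 1)
    (hH2 : ⟪H - B, A - C⟫ = 0) (hH3 : ⟪H - C, B - A⟫ = 0) :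
    Kf A B C u u = dist (bary A B C u) H ^ 2 - ⟪A - H, B - H⟫ := by
  obtain ⟨hAC, hBC⟩ := inner_sub_eq_of_altitudes hH2 hH3
  have hP : bary A B C u - H = u 0 • (A - H) + u 1 • (B - H) + u 2 • (C - H) := by
    rw [bary, ← sub_eq_zero]
    linear_combination (norm := module) hu • H
  rw [Kf, conwayA_eq_inner, conwayA_eq_inner, conwayA_eq_inner, dist_eq_norm, hP,
    ← real_inner_self_eq_norm_sq, show B - A = (B - H) - (A - H) by abel,
    show C - A = (C - H) - (A - H) by abel, show C - B = (C - H) - (B - H) by abel,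
    show A - B = (A - H) - (B - H) by abel, show A - C = (A - H) - (C - H) by abel,
    show B - C = (B - H) - (C - H) by abel]
  generalize A - H = a, B - H = b, C - H = c at *
  simp only [inner_add_left, inner_add_right, inner_sub_left, inner_sub_right,
    real_inner_smul_left, real_inner_smul_right, real_inner_comm a b, real_inner_comm a c,
    real_inner_comm b c, ← hAC, ← hBC]
  linear_combination -(u 0 + u 1 + u 2 + 1) * ⟪a, b⟫ * hu

theorem stmt8_general (A B C O Hpt : Pt) (h : sArea A B C ≠ 0)
    (hO : dist O A = dist O B ∧ dist O B = dist O C)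
    (hH2 : ⟪Hpt - B, A - C⟫ = 0)
    (hH3 : ⟪Hpt - C, B - A⟫ = 0)
    (Ob Hb : Fin 3 → ℝ) (hOb1 : Ob 0 + Ob 1 + Ob 2 = 1) (hOb : O = bary A B C Ob)
    (hHb1 : Hb 0 + Hb 1 + Hb 2 = 1) (hHb : Hpt = bary A B C Hb)
    (R : ℝ) (hR : R = dist O A) :
    Kf A B C Ob Ob + Kf A B C Hb Hb = R ^ 2 := by
  have hSylvester := sub_eq_sum_sub_of_circumcenter_of_altitudes h hO hH2 hH3
  have hR2 := dist_sq_eq_dist_sq_sub_two_inner hSylvester (inner_sub_eq_of_altitudes hH2 hH3).1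
  rw [Kf_self_eq_dist_sq_sub hOb1 hH2 hH3, Kf_self_eq_dist_sq_sub hHb1 hH2 hH3, ← hOb, ← hHb,
    dist_self, hR, hR2]
  ring

theorem stmt8 (A B C O Hpt : Pt) (h : sArea A B C ≠ 0)
    (hO : dist O A = dist O B ∧ dist O B = dist O C)
    (hH1 : ⟪Hpt - A, C - B⟫ = 0) (hH2 : ⟪Hpt - B, A - C⟫ = 0)
    (hH3 : ⟪Hpt - C, B - A⟫ = 0)
    (Ob Hb : Fin 3 → ℝ) (hOb1 : Ob 0 + Ob 1 + Ob 2 = 1) (hOb : O = bary A B C Ob)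
    (hHb1 : Hb 0 + Hb 1 + Hb 2 = 1) (hHb : Hpt = bary A B C Hb)
    (R : ℝ) (hR : R = dist O A) :
    Kf A B C Ob Ob + Kf A B C Hb Hb = R ^ 2 :=
  stmt8_general A B C O Hpt h hO hH2 hH3 Ob Hb hOb1 hOb hHb1 hHb R hR
end
end

section
/- A point X (normalized barycentric coordinates, K = diag(S_A, S_B, S_C), G the centroid) lies on the nine-point circle of triangle ABC if and only if X K Xᵀ − (3/2) G K Xᵀ = 0. -/
open scoped RealInnerProductSpace

noncomputable section

/-!
Taking the circumcenter `O` as origin, `A + B + C - 2 • O` satisfies the altitude conditions,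
and since two sides of a nondegenerate triangle span the plane it is the orthocenter. Hence
`X - N = ∑ (xᵢ - 1/2) • (Pᵢ - O)`, and expanding `‖X - N‖²` with `‖Pᵢ - O‖ = R` and
`S_A = ⟪B - A, C - A⟫` gives `‖X - N‖² = (R/2)² + X K Xᵀ - (3/2) G K Xᵀ`.
-/

lemma conwayA_eq_inner_s10 (A B C : Pt) : conwayA A B C = ⟪B - A, C - A⟫ := by
  rw [real_inner_eq_norm_mul_self_add_norm_mul_self_sub_norm_sub_mul_self_div_two, conwayA,
    dist_eq_norm, dist_eq_norm, dist_eq_norm, sub_sub_sub_cancel_right, norm_sub_rev C A,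
    norm_sub_rev A B, norm_sub_rev B C]
  ring

lemma eq_zero_of_inner_eq_zero_of_sArea_ne_zero {A B C : Pt} (h : sArea A B C ≠ 0) {v : Pt}
    (hBC : ⟪v, C - B⟫ = 0) (hCA : ⟪v, A - C⟫ = 0) : v = 0 := by
  simp only [PiLp.inner_apply, RCLike.inner_apply, conj_trivial, Fin.sum_univ_two,
    PiLp.sub_apply] at hBC hCA
  have hdet : (B 0 - A 0) * (C 1 - A 1) - (C 0 - A 0) * (B 1 - A 1) ≠ 0 := by
    contrapose! h
    simp [sArea, h]
  have hv0 : v 0 = 0 := by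
    refine (mul_eq_zero.mp ?_).resolve_right hdet
    linear_combination (A 1 - C 1) * hBC - (C 1 - B 1) * hCA
  have hv1 : v 1 = 0 := by
    refine (mul_eq_zero.mp ?_).resolve_right hdet
    linear_combination (C 0 - B 0) * hCA - (A 0 - C 0) * hBC
  ext i
  fin_cases i <;> assumption

lemma orthocenter_eq_of_circumcenter {A B C O H : Pt} (h : sArea A B C ≠ 0)
    (hO : dist O A = dist O B ∧ dist O B = dist O C)
    (hHA : ⟪H - A, C - B⟫ = 0) (hHB : ⟪H - B, A - C⟫ = 0) :
    H = A + B + C - (2 : ℝ) • O := by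
  have hperp (P Q R : Pt) (hPQR : P + Q + R = A + B + C) (hQR : dist O Q = dist O R) :
      ⟪A + B + C - (2 : ℝ) • O - P, R - Q⟫ = 0 := by
    have : A + B + C - (2 : ℝ) • O - P = (R - O) + (Q - O) := by
      rw [← hPQR]; module
    rw [this, show R - Q = (R - O) - (Q - O) by abel, real_inner_add_sub_eq_zero_iff,
      ← dist_eq_norm', ← dist_eq_norm', hQR]
  rw [← sub_eq_zero]
  apply eq_zero_of_inner_eq_zero_of_sArea_ne_zero h
  · rw [show H - (A + B + C - (2 : ℝ) • O) = (H - A) - (A + B + C - (2 : ℝ) • O - A) by abel,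
      inner_sub_left, hHA, hperp A B C rfl hO.2, sub_zero]
  · rw [show H - (A + B + C - (2 : ℝ) • O) = (H - B) - (A + B + C - (2 : ℝ) • O - B) by abel,
      inner_sub_left, hHB, hperp B C A (by abel) (hO.1.trans hO.2).symm, sub_zero]


lemma dist_bary_midpoint_sq {A B C O : Pt} (hO : dist O A = dist O B ∧ dist O B = dist O C)
    {X : Fin 3 → ℝ} (hX : X 0 + X 1 + X 2 = 1) :
    dist (bary A B C X) (midpoint ℝ O (A + B + C - (2 : ℝ) • O)) ^ 2 =
      (dist O A / 2) ^ 2 + (Kf A B C X X - (3 / 2) * Kf A B C ![1 / 3, 1 / 3, 1 / 3] X) := by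
  have hv : bary A B C X - midpoint ℝ O (A + B + C - (2 : ℝ) • O) =
      (X 0 - 1 / 2) • (A - O) + (X 1 - 1 / 2) • (B - O) + (X 2 - 1 / 2) • (C - O) := by
    rw [bary, midpoint_eq_smul_add, invOf_eq_inv, show X 2 = 1 - X 0 - X 1 by linarith]
    module
  have ha : ⟪A - O, A - O⟫ = dist O A ^ 2 := by
    rw [real_inner_self_eq_norm_sq, dist_comm, dist_eq_norm]
  have hb : ⟪B - O, B - O⟫ = dist O A ^ 2 := by
    rw [real_inner_self_eq_norm_sq, hO.1, dist_comm, dist_eq_norm]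
  have hc : ⟪C - O, C - O⟫ = dist O A ^ 2 := by
    rw [real_inner_self_eq_norm_sq, hO.1, hO.2, dist_comm, dist_eq_norm]
  simp only [Kf, conwayA_eq_inner_s10]
  rw [← sub_sub_sub_cancel_right B A O, ← sub_sub_sub_cancel_right C A O,
    ← sub_sub_sub_cancel_right C B O, ← sub_sub_sub_cancel_right A B O,
    ← sub_sub_sub_cancel_right A C O, ← sub_sub_sub_cancel_right B C O,
    dist_eq_norm, hv, ← real_inner_self_eq_norm_sq]
  generalize A - O = a, B - O = b, C - O = c at ha hb hc ⊢
  simp only [inner_add_left, inner_add_right, inner_sub_left, inner_sub_right,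
    real_inner_smul_left, real_inner_smul_right, ha, hb, hc, real_inner_comm a b,
    real_inner_comm a c, real_inner_comm b c, Matrix.cons_val]
  rw [show X 2 = 1 - X 0 - X 1 by linarith]
  ring

theorem stmt10_general (A B C O Hpt : Pt) (h : sArea A B C ≠ 0)
    (hO : dist O A = dist O B ∧ dist O B = dist O C)
    (hH1 : ⟪Hpt - A, C - B⟫ = 0) (hH2 : ⟪Hpt - B, A - C⟫ = 0)
    (N : Pt) (hN : N = midpoint ℝ O Hpt) (R : ℝ) (hR : R = dist O A)
    (X : Fin 3 → ℝ) (Xpt : Pt) (hX1 : X 0 + X 1 + X 2 = 1)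
    (hXpt : Xpt = bary A B C X) :
    dist Xpt N = R / 2 ↔
      Kf A B C X X - (3 / 2) * Kf A B C ![1 / 3, 1 / 3, 1 / 3] X = 0 := by
  subst hN hR hXpt
  rw [orthocenter_eq_of_circumcenter h hO hH1 hH2, ← sq_eq_sq₀ dist_nonneg (by positivity),
    dist_bary_midpoint_sq hO hX1, add_eq_left]

theorem stmt10 (A B C O Hpt : Pt) (h : sArea A B C ≠ 0)
    (hO : dist O A = dist O B ∧ dist O B = dist O C)
    (hH1 : ⟪Hpt - A, C - B⟫ = 0) (hH2 : ⟪Hpt - B, A - C⟫ = 0)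
    (hH3 : ⟪Hpt - C, B - A⟫ = 0)
    (N : Pt) (hN : N = midpoint ℝ O Hpt) (R : ℝ) (hR : R = dist O A)
    (X : Fin 3 → ℝ) (Xpt : Pt) (hX1 : X 0 + X 1 + X 2 = 1)
    (hXpt : Xpt = bary A B C X) :
    dist Xpt N = R / 2 ↔
      Kf A B C X X - (3 / 2) * Kf A B C ![1 / 3, 1 / 3, 1 / 3] X = 0 :=
  stmt10_general A B C O Hpt h hO hH1 hH2 N hN R hR X Xpt hX1 hXpt
end
end

section
/- The foot H_A of the altitude from the orthocenter H (equivalently from A) onto side BC lies on the nine-point circle: H_A K H_Aᵀ = (3/2) G K H_Aᵀ, where K = diag(S_A, S_B, S_C). -/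
open scoped RealInnerProductSpace

noncomputable section

theorem stmt12 (A B C Ha : Pt) (h : sArea A B C ≠ 0)
    (hfoot : ∃ t : ℝ, Ha = B + t • (C - B)) (hperp : ⟪Ha - A, C - B⟫ = 0)
    (Hab : Fin 3 → ℝ) (hHab1 : Hab 0 + Hab 1 + Hab 2 = 1)
    (hHab : Ha = bary A B C Hab) :
    Kf A B C Hab Hab = (3 / 2) * Kf A B C ![1 / 3, 1 / 3, 1 / 3] Hab := by
  obtain ⟨t, hfoot⟩ := hfoot
  have hd : ∀ X Y : Pt, dist X Y ^ 2 = (X 0 - Y 0)^2 + (X 1 - Y 1)^2 := by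
    intro X Y
    rw [EuclideanSpace.dist_eq, Real.sq_sqrt (by positivity)]
    simp [Fin.sum_univ_two, Real.dist_eq, sq_abs]
  have hf0 : Ha 0 = B 0 + t * (C 0 - B 0) := by rw [hfoot]; simp
  have hf1 : Ha 1 = B 1 + t * (C 1 - B 1) := by rw [hfoot]; simp
  have e0 : Hab 0 * A 0 + Hab 1 * B 0 + Hab 2 * C 0 = B 0 + t * (C 0 - B 0) := by
    rw [← hf0, hHab]; simp [bary]
  have e1 : Hab 0 * A 1 + Hab 1 * B 1 + Hab 2 * C 1 = B 1 + t * (C 1 - B 1) := by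
    rw [← hf1, hHab]; simp [bary]
  have hD : (B 0 - A 0) * (C 1 - A 1) - (C 0 - A 0) * (B 1 - A 1) ≠ 0 := by
    intro hz
    apply h
    unfold sArea
    rw [hz]; ring
  have h0 : Hab 0 = 0 := by
    have key : Hab 0 * ((B 0 - A 0) * (C 1 - A 1) - (C 0 - A 0) * (B 1 - A 1)) = 0 := by
      linear_combination (B 1 - C 1) * e0 + (C 0 - B 0) * e1 +
        (B 0 * C 1 - B 1 * C 0) * hHab1
    exact (mul_eq_zero.mp key).resolve_right hD
  have q0 : (Hab 2 - t) * (C 0 - B 0) = 0 := by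
    linear_combination e0 - B 0 * hHab1 - (A 0 - B 0) * h0
  have q1 : (Hab 2 - t) * (C 1 - B 1) = 0 := by
    linear_combination e1 - B 1 * hHab1 - (A 1 - B 1) * h0
  have h2 : Hab 2 = t := by
    by_contra hne
    have hne' : Hab 2 - t ≠ 0 := sub_ne_zero.mpr hne
    have c0 : C 0 - B 0 = 0 := (mul_eq_zero.mp q0).resolve_left hne'
    have c1 : C 1 - B 1 = 0 := (mul_eq_zero.mp q1).resolve_left hne'
    apply hD
    linear_combination (B 0 - A 0) * c1 - (B 1 - A 1) * c0
  have h1 : Hab 1 = 1 - t := by linear_combination hHab1 - h0 - h2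
  have p : (B 0 - A 0 + t * (C 0 - B 0)) * (C 0 - B 0)
      + (B 1 - A 1 + t * (C 1 - B 1)) * (C 1 - B 1) = 0 := by
    have := hperp
    simp only [PiLp.inner_apply, RCLike.inner_apply, conj_trivial, Fin.sum_univ_two,
      PiLp.sub_apply] at this
    rw [hf0, hf1] at this
    linear_combination this
  unfold Kf conwayA
  rw [hd, hd, hd, h0, h1, h2]
  simp only [Matrix.cons_val_zero, Matrix.cons_val_one, Matrix.head_cons,
    Matrix.cons_val_two, Matrix.tail_cons]
  linear_combination (t - 1/2) * p
end
end

section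
/- Let I be the incenter of triangle ABC with inradius r and circumradius R, and let G be the centroid, K = diag(S_A, S_B, S_C). Then I K Iᵀ = 2r² and 3 G K Iᵀ = 2Rr + 2r² (in normalized barycentric coordinates). -/
open scoped RealInnerProductSpace

noncomputable section

/-!
With `a, b, c` the side lengths, the form `K` evaluated at the incenter coordinates `a/(2p), …`
reduces to two symmetric polynomials: `∑ a² (b² + c² - a²) = 16 S²` is Heron's formula, and
`∑ a (b² + c² - a²) = 2abc + (-a + b + c)(a - b + c)(a + b - c) = 2abc + 8 S² / p`,
again by Heron. Together with `R r = abc / (4p)` and `r = S / p` this gives both identities.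
-/

lemma dist_sq_eq_coord (X Y : Pt) : dist X Y ^ 2 = (X 0 - Y 0) ^ 2 + (X 1 - Y 1) ^ 2 := by
  rw [EuclideanSpace.dist_eq, Real.sq_sqrt (by positivity)]
  simp [Fin.sum_univ_two, Real.dist_eq, sq_abs]

theorem sixteen_mul_sArea_sq (A B C : Pt) :
    16 * sArea A B C ^ 2 =
      (dist B C + dist C A + dist A B) * (-dist B C + dist C A + dist A B) *
        (dist B C - dist C A + dist A B) * (dist B C + dist C A - dist A B) := by
  set a := dist B C
  set b := dist C A
  set c := dist A B
  have expand : (a + b + c) * (-a + b + c) * (a - b + c) * (a + b - c) =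
      2 * a ^ 2 * b ^ 2 + 2 * b ^ 2 * c ^ 2 + 2 * c ^ 2 * a ^ 2
        - (a ^ 2) ^ 2 - (b ^ 2) ^ 2 - (c ^ 2) ^ 2 := by ring
  rw [expand, dist_sq_eq_coord, dist_sq_eq_coord, dist_sq_eq_coord, sArea]
  ring

theorem stmt14 (A B C : Pt) (h : sArea A B C ≠ 0)
    (a b c S p r R : ℝ) (ha : a = dist B C) (hb : b = dist C A) (hc : c = dist A B)
    (hS : S = |sArea A B C|) (hp : p = (a + b + c) / 2) (hr : r = S / p)
    (hR : R = a * b * c / (4 * S))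
    (Ib : Fin 3 → ℝ) (hIb : Ib = ![a / (2 * p), b / (2 * p), c / (2 * p)]) :
    Kf A B C Ib Ib = 2 * r ^ 2 ∧
      Kf A B C ![1, 1, 1] Ib = 2 * R * r + 2 * r ^ 2 := by
  have heron := sixteen_mul_sArea_sq A B C
  rw [← ha, ← hb, ← hc] at heron
  have hS_sq : S ^ 2 = sArea A B C ^ 2 := by rw [hS, sq_abs]
  have hS0 : S ≠ 0 := hS ▸ abs_ne_zero.mpr h
  have hp0 : p ≠ 0 := by
    rintro rfl
    rw [show a + b + c = 0 by linarith] at heron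
    exact h (by simpa using heron)
  have hK : ∀ u v : Fin 3 → ℝ, Kf A B C u v = ((b ^ 2 + c ^ 2 - a ^ 2) * u 0 * v 0 +
      (c ^ 2 + a ^ 2 - b ^ 2) * u 1 * v 1 + (a ^ 2 + b ^ 2 - c ^ 2) * u 2 * v 2) / 2 := by
    intro u v
    simp only [Kf, conwayA, ← ha, ← hb, ← hc]
    ring
  have hsum : a + b + c = 2 * p := by linarith
  subst hIb hr hR
  simp only [hK, Matrix.cons_val_zero, Matrix.cons_val_one, Matrix.cons_val_two,
    Matrix.head_cons, Matrix.tail_cons]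
  constructor
  · field_simp
    linear_combination (-1) * heron - 16 * hS_sq
  · field_simp
    linear_combination
      (-2) * heron - 32 * hS_sq - 2 * ((-a + b + c) * (a - b + c) * (a + b - c)) * hsum
end
end
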